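/- arXiv:1612.08531 — 2 statements merged into one kernel-verified Lean document; each statement's English description precedes it below -/
import Mathlib

section
/- Let G be a finite simple graph and let M be a maximal matching in G. Then for every integer k with |M| ≤ k ≤ ν(G) there exists a maximal matching M' in G of size exactly k that covers every vertex covered by M. -/
open SimpleGraph

variable {V : Type*}

/-- `M` is a matching in `G`: a set of pairwise vertex-disjoint edges of `G`. -/
def IsMatchingIn (G : SimpleGraph V) (M : Finset (Sym2 V)) : Prop :=
  (∀ e ∈ M, e ∈ G.edgeSet) ∧
    ∀ e ∈ M, ∀ f ∈ M, e ≠ f → ∀ v : V, v ∈ e → v ∉ f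

/-- `M` is a maximal matching in `G`: a matching not properly contained in another matching. -/
def IsMaximalMatchingIn (G : SimpleGraph V) (M : Finset (Sym2 V)) : Prop :=
  IsMatchingIn G M ∧ ∀ M', IsMatchingIn G M' → M ⊆ M' → M' = M

/-- `M` saturates (covers) the vertex `v`. -/
def Sat (M : Finset (Sym2 V)) (v : V) : Prop := ∃ e ∈ M, v ∈ e

/-- The matching number `ν(G)`. -/
noncomputable def nuNum (G : SimpleGraph V) : ℕ :=
  sSup {n | ∃ M, IsMatchingIn G M ∧ M.card = n}

/-- The minimum maximal matching number `β(G)`. -/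
noncomputable def betaNum (G : SimpleGraph V) : ℕ :=
  sInf {n | ∃ M, IsMaximalMatchingIn G M ∧ M.card = n}

/-- The matching gap `μ(G) = ν(G) - β(G)`. -/
noncomputable def muGap (G : SimpleGraph V) : ℕ := nuNum G - betaNum G

/-! A matching that covers every vertex covered by the maximal matching `M` is itself maximal,
so it suffices to grow a matching by one edge without uncovering any vertex, as long as some
larger matching `N` exists. Take `x` covered by `N` but not by `M`, with `N`-edge `xy`. If `y` is
uncovered, add `xy`. Otherwise `y` lies on an `M`-edge `yz`; induction on `|M|`, applied to
`M - yz` and `N - xy`, gives a matching of size `|M|` covering the vertices of `M - yz` and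
using only vertices of `M - yz` and `N - xy`, so neither `x` nor `y`. Add `xy` to it if `z` is
covered, and `yz` otherwise. -/

section Matching

variable {G : SimpleGraph V} {M N : Finset (Sym2 V)} {e f : Sym2 V} {v : V}

theorem Sat.mono (h : Sat M v) (hMN : M ⊆ N) : Sat N v :=
  let ⟨e, he, hv⟩ := h
  ⟨e, hMN he, hv⟩

theorem sat_insert [DecidableEq V] : Sat (insert e M) v ↔ v ∈ e ∨ Sat M v := by
  simp [Sat]

theorem sat_iff_mem_or_sat_erase [DecidableEq V] (hf : f ∈ M) :
    Sat M v ↔ v ∈ f ∨ Sat (M.erase f) v := by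
  rw [← sat_insert, Finset.insert_erase hf]

theorem sat_iff_mem_biUnion [DecidableEq V] : Sat M v ↔ v ∈ M.biUnion Sym2.toFinset := by
  simp [Sat]

theorem IsMatchingIn.subset (hN : IsMatchingIn G N) (hMN : M ⊆ N) : IsMatchingIn G M :=
  ⟨fun e he => hN.1 e (hMN he), fun e he f hf => hN.2 e (hMN he) f (hMN hf)⟩

theorem IsMatchingIn.not_sat_erase [DecidableEq V] (hM : IsMatchingIn G M) (hf : f ∈ M)
    (hv : v ∈ f) : ¬ Sat (M.erase f) v := by
  rintro ⟨g, hg, hvg⟩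
  exact hM.2 f hf g (Finset.mem_of_mem_erase hg) (Finset.ne_of_mem_erase hg).symm v hv hvg

theorem IsMatchingIn.insert [DecidableEq V] (hM : IsMatchingIn G M) (he : e ∈ G.edgeSet)
    (hfree : ∀ v ∈ e, ¬ Sat M v) : IsMatchingIn G (insert e M) := by
  refine ⟨by simpa [Set.insert_subset_iff] using And.intro he hM.1, ?_⟩
  simp only [Finset.mem_insert]
  rintro f (rfl | hf) g (rfl | hg) hfg v hvf hvg
  · exact hfg rfl
  · exact hfree v hvf ⟨g, hg, hvg⟩
  · exact hfree v hvg ⟨f, hf, hvf⟩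
  · exact hM.2 f hf g hg hfg v hvf hvg

theorem card_insert_of_not_sat [DecidableEq V] (he : v ∈ e) (hfree : ¬ Sat M v) :
    (insert e M).card = M.card + 1 :=
  Finset.card_insert_of_notMem fun heM => hfree ⟨e, heM, he⟩

theorem IsMatchingIn.card_biUnion_toFinset [DecidableEq V] (hM : IsMatchingIn G M) :
    (M.biUnion Sym2.toFinset).card = 2 * M.card := by
  rw [Finset.card_biUnion, Finset.sum_congr rfl fun e he =>
    Sym2.card_toFinset_of_not_isDiag e (G.not_isDiag_of_mem_edgeSet (hM.1 e he))]
  · simp [mul_comm]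
  · intro e he f hf hef
    simp only [Function.onFun, Finset.disjoint_left, Sym2.mem_toFinset]
    exact hM.2 e he f hf hef

theorem exists_sat_not_sat_of_card_lt (hN : IsMatchingIn G N) (hMN : M.card < N.card) :
    ∃ x, Sat N x ∧ ¬ Sat M x := by
  classical
  by_contra! hsub
  have hcard : (N.biUnion Sym2.toFinset).card ≤ (M.biUnion Sym2.toFinset).card :=
    Finset.card_le_card fun x hx =>
      sat_iff_mem_biUnion.mp (hsub x (sat_iff_mem_biUnion.mpr hx))
  have hM : (M.biUnion Sym2.toFinset).card ≤ 2 * M.card := by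
    simpa [mul_comm] using Finset.card_biUnion_le_card_mul M Sym2.toFinset 2
      fun e _ => by rw [Sym2.card_toFinset]; split_ifs <;> omega
  rw [hN.card_biUnion_toFinset] at hcard
  omega

theorem exists_augment_of_forall_not_sat [DecidableEq V] (hM : IsMatchingIn G M)
    (hN : IsMatchingIn G N) (he : e ∈ N) (hfree : ∀ v ∈ e, ¬ Sat M v) :
    ∃ M', IsMatchingIn G M' ∧ M'.card = M.card + 1 ∧
      (∀ v, Sat M v → Sat M' v) ∧ (∀ v, Sat M' v → Sat M v ∨ Sat N v) := by
  refine ⟨insert e M, hM.insert (hN.1 e he) hfree,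
    card_insert_of_not_sat (Sym2.out_fst_mem e) (hfree _ (Sym2.out_fst_mem e)),
    fun v hv => hv.mono (Finset.subset_insert _ _), fun v hv => ?_⟩
  rcases sat_insert.mp hv with hv | hv
  exacts [Or.inr ⟨e, he, hv⟩, Or.inl hv]

theorem exists_free_edge_covering_of_not_sat {K : Finset (Sym2 V)} {x y z : V}
    (hx : ¬ Sat K x) (hy : ¬ Sat K y) :
    ∃ g, (g = s(x, y) ∨ g = s(y, z)) ∧ (∀ v ∈ g, ¬ Sat K v) ∧ y ∈ g ∧
      ∀ v ∈ s(y, z), v ∈ g ∨ Sat K v := by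
  by_cases hz : Sat K z
  · refine ⟨s(x, y), .inl rfl, ?_, Sym2.mem_mk_right x y, ?_⟩
    · rintro v hv; rcases Sym2.mem_iff.mp hv with rfl | rfl <;> assumption
    · rintro v hv; rcases Sym2.mem_iff.mp hv with rfl | rfl
      exacts [.inl (Sym2.mem_mk_right x v), .inr hz]
  · refine ⟨s(y, z), .inr rfl, ?_, Sym2.mem_mk_left y z, fun v hv => .inl hv⟩
    rintro v hv; rcases Sym2.mem_iff.mp hv with rfl | rfl <;> assumption

theorem exists_augment_of_card_lt (hM : IsMatchingIn G M) (hN : IsMatchingIn G N)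
    (hMN : M.card < N.card) :
    ∃ M', IsMatchingIn G M' ∧ M'.card = M.card + 1 ∧
      (∀ v, Sat M v → Sat M' v) ∧ (∀ v, Sat M' v → Sat M v ∨ Sat N v) := by
  classical
  induction M using Finset.strongInduction generalizing N with
  | H M ih =>
  obtain ⟨x, ⟨e, heN, hxe⟩, hxM⟩ := exists_sat_not_sat_of_card_lt hN hMN
  obtain ⟨y, rfl⟩ := Sym2.mem_iff_exists.mp hxe
  by_cases hyM : Sat M y
  swap
  · refine exists_augment_of_forall_not_sat hM hN heN fun v hv => ?_
    rcases Sym2.mem_iff.mp hv with rfl | rfl <;> assumption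
  obtain ⟨f, hfM, hyf⟩ := hyM
  obtain ⟨z, rfl⟩ := Sym2.mem_iff_exists.mp hyf
  obtain ⟨M₂, hM₂, hcard₂, hcover₂, hwithin₂⟩ :=
    ih _ (Finset.erase_ssubset hfM) (hM.subset (Finset.erase_subset _ _))
      (hN.subset (Finset.erase_subset _ _)) (by
        rw [Finset.card_erase_of_mem hfM, Finset.card_erase_of_mem heN]
        have := Finset.card_pos.mpr ⟨_, hfM⟩
        omega)
  have hx₂ : ¬ Sat M₂ x := fun h => (hwithin₂ x h).elim
    (fun h => hxM (h.mono (Finset.erase_subset _ _))) (hN.not_sat_erase heN hxe)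
  have hy₂ : ¬ Sat M₂ y := fun h => (hwithin₂ y h).elim
    (hM.not_sat_erase hfM hyf) (hN.not_sat_erase heN (Sym2.mem_mk_right x y))
  obtain ⟨g, hg, hgfree, hyg, hcover⟩ :=
    exists_free_edge_covering_of_not_sat (z := z) hx₂ hy₂
  have hgMN : g ∈ M ∨ g ∈ N := by rcases hg with rfl | rfl; exacts [.inr heN, .inl hfM]
  refine ⟨insert g M₂, hM₂.insert (hgMN.elim (hM.1 g) (hN.1 g)) hgfree, ?_,
    fun v hv => ?_, fun v hv => ?_⟩
  · rw [card_insert_of_not_sat hyg hy₂, hcard₂, Finset.card_erase_add_one hfM]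
  · rcases (sat_iff_mem_or_sat_erase hfM).mp hv with hv | hv
    · exact (hcover v hv).elim (fun hv => sat_insert.mpr (.inl hv))
        fun hv => hv.mono (Finset.subset_insert _ _)
    · exact (hcover₂ v hv).mono (Finset.subset_insert _ _)
  · rcases sat_insert.mp hv with hv | hv
    · exact hgMN.imp (⟨g, ·, hv⟩) (⟨g, ·, hv⟩)
    · exact (hwithin₂ v hv).imp (·.mono (Finset.erase_subset _ _))
        (·.mono (Finset.erase_subset _ _))

theorem IsMaximalMatchingIn.of_sat (hM : IsMaximalMatchingIn G M) (hN : IsMatchingIn G N)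
    (hMN : ∀ v, Sat M v → Sat N v) : IsMaximalMatchingIn G N := by
  classical
  refine ⟨hN, fun K hK hNK => (hNK.antisymm fun e heK => ?_).symm⟩
  by_contra heN
  -- `e` would be disjoint from `N`, hence from `M`, contradicting the maximality of `M`.
  have hfree : ∀ v ∈ e, ¬ Sat M v := by
    rintro v hv hMv
    obtain ⟨f, hf, hvf⟩ := hMN v hMv
    exact hK.2 e heK f (hNK hf) (fun h => heN (h ▸ hf)) v hv hvf
  have heM : e ∈ M := hM.2 _ (hM.1.insert (hK.1 e heK) hfree) (Finset.subset_insert _ _) ▸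
    Finset.mem_insert_self e M
  exact hfree _ (Sym2.out_fst_mem e) ⟨e, heM, Sym2.out_fst_mem e⟩

theorem exists_isMatchingIn_card_eq_nuNum [Finite V] (G : SimpleGraph V) :
    ∃ N, IsMatchingIn G N ∧ N.card = nuNum G := by
  have : Fintype (Sym2 V) := Fintype.ofFinite _
  refine Nat.sSup_mem (s := {n | ∃ M, IsMatchingIn G M ∧ M.card = n})
    ⟨0, ∅, ⟨by simp, by simp⟩, rfl⟩ ⟨Fintype.card (Sym2 V), ?_⟩
  rintro _ ⟨M, -, rfl⟩
  exact M.card_le_univ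

end Matching

theorem stmt_0 {V : Type*} [Fintype V] (G : SimpleGraph V) (M : Finset (Sym2 V))
    (hM : IsMaximalMatchingIn G M) (k : ℕ) (hk₁ : M.card ≤ k) (hk₂ : k ≤ nuNum G) :
    ∃ M' : Finset (Sym2 V), IsMaximalMatchingIn G M' ∧ M'.card = k ∧
      ∀ v : V, Sat M v → Sat M' v := by
  obtain ⟨N, hN, hNcard⟩ := exists_isMatchingIn_card_eq_nuNum G
  induction k, hk₁ using Nat.le_induction with
  | base => exact ⟨M, hM, rfl, fun _ hv => hv⟩
  | succ k _ ih =>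
    obtain ⟨M₁, hM₁, rfl, hcover₁⟩ := ih (by omega)
    obtain ⟨M₂, hM₂, hcard₂, hcover₂, -⟩ :=
      exists_augment_of_card_lt hM₁.1 hN (by omega)
    exact ⟨M₂, hM₁.of_sat hM₂ hcover₂, hcard₂, fun v hv => hcover₂ v (hcover₁ v hv)⟩
end

section
/- For every positive integer k, the graph G_k = kP_4, the disjoint union of k paths on four vertices, satisfies ν(G_k) = 2k, β(G_k) = k, μ(G_k) = k, and η(G_k) = k; in particular, the bound μ(G) ≤ η(G) is attained with equality by graphs with arbitrarily large values of both parameters. -/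
open SimpleGraph

variable {V : Type*}

/-- `M` covers the vertex set `S`. -/
def CoversSet (M : Finset (Sym2 V)) (S : Set V) : Prop := ∀ v ∈ S, Sat M v

/-- `S` is an equimatchable set in `G`: all maximal matchings of `G` covering `S`
have the same size. -/
def EquiSet (G : SimpleGraph V) (S : Set V) : Prop :=
  ∀ M M' : Finset (Sym2 V), IsMaximalMatchingIn G M → IsMaximalMatchingIn G M' →
    CoversSet M S → CoversSet M' S → M.card = M'.card

/-- The equimatchability defect `η(G)`: the minimum size of an equimatchable set in `G`. -/
noncomputable def etaDefect (G : SimpleGraph V) : ℕ :=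
  sInf {n | ∃ S : Set V, EquiSet G S ∧ S.ncard = n}

/-- `kP₄`: the disjoint union of `k` copies of the path on four vertices. -/
def kP4 (k : ℕ) : SimpleGraph (Fin k × Fin 4) where
  Adj x y := x.1 = y.1 ∧ (SimpleGraph.pathGraph 4).Adj x.2 y.2
  symm := by
    refine ⟨?_⟩
    rintro ⟨i, a⟩ ⟨j, b⟩ ⟨h1, h2⟩
    exact ⟨h1.symm, h2.symm⟩
  loopless := by
    refine ⟨?_⟩
    rintro ⟨i, a⟩ ⟨-, h⟩
    exact h.ne rfl

/-!
Matchings of `kP₄` are assembled componentwise from edge sets of `P₄`: a set of edges is a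
(maximal) matching of `kP₄` iff each of its `k` restrictions is a (maximal) matching of `P₄`, and
its size is the sum of theirs. Checking all subsets of the three edges of `P₄` shows that its
matchings have at most two edges and that its maximal matchings are `{01, 23}` and `{12}`. This
gives `ν = 2k` and `β = k`. The `k` vertices `(i, 0)` form an equimatchable set, since `{12}`
leaves `0` uncovered, so the only maximal matching covering them is `{01, 23}` in every component.
Conversely, a set missing the component `i` is covered both by `{01, 23}` everywhere and by the
matching that uses `{12}` on component `i` instead, and these differ in size by one.
-/

theorem IsMatchingIn.eq_of_mem {G : SimpleGraph V} {M : Finset (Sym2 V)}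
    (hM : IsMatchingIn G M) {e f : Sym2 V} (he : e ∈ M) (hf : f ∈ M) {v : V}
    (hve : v ∈ e) (hvf : v ∈ f) : e = f := by
  by_contra hne
  exact hM.2 e he f hf hne v hve hvf

theorem IsMatchingIn.mem_powerset_edgeFinset {G : SimpleGraph V} [Fintype G.edgeSet]
    {M : Finset (Sym2 V)} (hM : IsMatchingIn G M) : M ∈ G.edgeFinset.powerset :=
  Finset.mem_powerset.mpr fun e he => mem_edgeFinset.mpr (hM.1 e he)

theorem isMaximalMatchingIn_iff {G : SimpleGraph V} {M : Finset (Sym2 V)} :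
    IsMaximalMatchingIn G M ↔
      IsMatchingIn G M ∧ ∀ e ∈ G.edgeSet, ∃ f ∈ M, ∃ v ∈ e, v ∈ f := by
  classical
  refine ⟨fun hM => ⟨hM.1, fun e he => ?_⟩, fun ⟨hM, hdom⟩ => ⟨hM, fun M' hM' hMM' => ?_⟩⟩
  · by_contra! hfree
    have hins : IsMatchingIn G (insert e M) := by
      refine ⟨fun f hf => ?_, fun f hf g hg hne v hvf hvg => ?_⟩
      · rcases Finset.mem_insert.mp hf with rfl | hfM
        exacts [he, hM.1.1 f hfM]
      · rcases Finset.mem_insert.mp hf with rfl | hfM <;>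
          rcases Finset.mem_insert.mp hg with rfl | hgM
        · exact hne rfl
        · exact hfree g hgM v hvf hvg
        · exact hfree f hfM v hvg hvf
        · exact hM.1.2 f hfM g hgM hne v hvf hvg
    have heM : e ∈ M := hM.2 _ hins (Finset.subset_insert e M) ▸ Finset.mem_insert_self e M
    exact hfree e heM _ (Sym2.out_fst_mem e) (Sym2.out_fst_mem e)
  · refine Finset.Subset.antisymm (fun e he => ?_) hMM'
    obtain ⟨f, hf, v, hve, hvf⟩ := hdom e (hM'.1 e he)
    rwa [hM'.eq_of_mem he (hMM' hf) hve hvf]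

instance (n : ℕ) : DecidableRel (pathGraph n).Adj :=
  fun _ _ => decidable_of_iff _ pathGraph_adj.symm

namespace kP4

open Finset

def perfect : Finset (Sym2 (Fin 4)) := {s(0, 1), s(2, 3)}

def middle : Finset (Sym2 (Fin 4)) := {s(1, 2)}

theorem card_le_two_of_isMatchingIn {m : Finset (Sym2 (Fin 4))}
    (hm : IsMatchingIn (pathGraph 4) m) : m.card ≤ 2 := by
  have hcases : ∀ m ∈ (pathGraph 4).edgeFinset.powerset,
      (∀ e ∈ m, ∀ f ∈ m, e ≠ f → ∀ v ∈ e, v ∉ f) → m.card ≤ 2 := by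
    decide +kernel
  exact hcases m hm.mem_powerset_edgeFinset hm.2

theorem isMaximalMatchingIn_pathGraph_iff {m : Finset (Sym2 (Fin 4))} :
    IsMaximalMatchingIn (pathGraph 4) m ↔ m = perfect ∨ m = middle := by
  have hcases : ∀ m ∈ (pathGraph 4).edgeFinset.powerset,
      ((∀ e ∈ m, ∀ f ∈ m, e ≠ f → ∀ v ∈ e, v ∉ f) ∧
        ∀ e ∈ (pathGraph 4).edgeSet, ∃ f ∈ m, ∃ v ∈ e, v ∈ f) → m = perfect ∨ m = middle := by
    decide
  rw [isMaximalMatchingIn_iff]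
  refine ⟨fun ⟨hm, hdom⟩ => hcases m hm.mem_powerset_edgeFinset ⟨hm.2, hdom⟩, ?_⟩
  rintro (rfl | rfl) <;> unfold IsMatchingIn <;> decide

theorem isMaximalMatchingIn_perfect : IsMaximalMatchingIn (pathGraph 4) perfect :=
  isMaximalMatchingIn_pathGraph_iff.mpr (.inl rfl)

theorem isMaximalMatchingIn_middle : IsMaximalMatchingIn (pathGraph 4) middle :=
  isMaximalMatchingIn_pathGraph_iff.mpr (.inr rfl)

theorem card_perfect : perfect.card = 2 := rfl

theorem card_middle : middle.card = 1 := rfl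

theorem sat_perfect (a : Fin 4) : Sat perfect a := by
  unfold Sat; revert a; decide

theorem not_sat_middle_zero : ¬ Sat middle 0 := by
  unfold Sat; decide

variable {k : ℕ}

def copy (i : Fin k) : Sym2 (Fin 4) ↪ Sym2 (Fin k × Fin 4) :=
  ⟨Sym2.map (Prod.mk i), Sym2.map.injective (Prod.mk_right_injective i)⟩

theorem mem_copy {i j : Fin k} {f : Sym2 (Fin 4)} {a : Fin 4} :
    (j, a) ∈ copy i f ↔ j = i ∧ a ∈ f := by
  simp only [copy, Function.Embedding.coeFn_mk, Sym2.mem_map, Prod.mk.injEq]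
  aesop

theorem copy_eq_copy_iff {i j : Fin k} {f g : Sym2 (Fin 4)} :
    copy i f = copy j g ↔ i = j ∧ f = g := by
  refine ⟨fun h => ?_, fun ⟨rfl, rfl⟩ => rfl⟩
  obtain rfl : i = j := (mem_copy.mp (h ▸ mem_copy.mpr ⟨rfl, Sym2.out_fst_mem f⟩)).1
  exact ⟨rfl, (copy i).injective h⟩

theorem copy_mem_edgeSet_iff {i : Fin k} {f : Sym2 (Fin 4)} :
    copy i f ∈ (kP4 k).edgeSet ↔ f ∈ (pathGraph 4).edgeSet := by
  induction f using Sym2.ind with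
  | _ a b => simp [copy, kP4]

theorem exists_copy_eq_of_mem_edgeSet {e : Sym2 (Fin k × Fin 4)}
    (he : e ∈ (kP4 k).edgeSet) : ∃ i f, copy i f = e := by
  induction e using Sym2.ind with
  | _ x y =>
    rcases x with ⟨i, a⟩
    rcases y with ⟨j, b⟩
    obtain rfl : i = j := he.1
    exact ⟨i, s(a, b), rfl⟩

def glue (m : Fin k → Finset (Sym2 (Fin 4))) : Finset (Sym2 (Fin k × Fin 4)) :=
  univ.biUnion fun i => (m i).map (copy i)

noncomputable def restrict (M : Finset (Sym2 (Fin k × Fin 4))) (i : Fin k) :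
    Finset (Sym2 (Fin 4)) :=
  M.preimage (copy i) (copy i).injective.injOn

theorem mem_glue {m : Fin k → Finset (Sym2 (Fin 4))} {e : Sym2 (Fin k × Fin 4)} :
    e ∈ glue m ↔ ∃ i, ∃ f ∈ m i, copy i f = e := by
  simp [glue]

theorem mem_restrict {M : Finset (Sym2 (Fin k × Fin 4))} {i : Fin k} {f : Sym2 (Fin 4)} :
    f ∈ restrict M i ↔ copy i f ∈ M :=
  mem_preimage

theorem glue_restrict {M : Finset (Sym2 (Fin k × Fin 4))}
    (hM : ∀ e ∈ M, e ∈ (kP4 k).edgeSet) : glue (restrict M) = M := by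
  ext e
  simp only [mem_glue, mem_restrict]
  constructor
  · rintro ⟨i, f, hf, rfl⟩
    exact hf
  · intro he
    obtain ⟨i, f, rfl⟩ := exists_copy_eq_of_mem_edgeSet (hM e he)
    exact ⟨i, f, he, rfl⟩

theorem card_glue (m : Fin k → Finset (Sym2 (Fin 4))) :
    (glue m).card = ∑ i, (m i).card := by
  rw [glue, card_biUnion]
  · simp
  · intro i _ j _ hij
    simp only [Function.onFun, Finset.disjoint_left, mem_map]
    rintro _ ⟨f, -, rfl⟩ ⟨g, -, h⟩
    exact hij (copy_eq_copy_iff.mp h).1.symm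

theorem sat_glue {m : Fin k → Finset (Sym2 (Fin 4))} {i : Fin k} {a : Fin 4} :
    Sat (glue m) (i, a) ↔ Sat (m i) a := by
  simp only [Sat, mem_glue]
  constructor
  · rintro ⟨_, ⟨j, f, hf, rfl⟩, hv⟩
    obtain ⟨rfl, ha⟩ := mem_copy.mp hv
    exact ⟨f, hf, ha⟩
  · rintro ⟨f, hf, ha⟩
    exact ⟨copy i f, ⟨i, f, hf, rfl⟩, mem_copy.mpr ⟨rfl, ha⟩⟩

theorem isMatchingIn_glue_iff {m : Fin k → Finset (Sym2 (Fin 4))} :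
    IsMatchingIn (kP4 k) (glue m) ↔ ∀ i, IsMatchingIn (pathGraph 4) (m i) := by
  constructor
  · intro hM i
    have hcopy : ∀ f ∈ m i, copy i f ∈ glue m := fun f hf => mem_glue.mpr ⟨i, f, hf, rfl⟩
    refine ⟨fun f hf => copy_mem_edgeSet_iff.mp (hM.1 _ (hcopy f hf)),
      fun f hf g hg hne a haf hag => hne ?_⟩
    have := hM.eq_of_mem (hcopy f hf) (hcopy g hg) (mem_copy.mpr ⟨rfl, haf⟩)
      (mem_copy.mpr ⟨rfl, hag⟩)
    exact (copy_eq_copy_iff.mp this).2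
  · intro hm
    refine ⟨fun e he => ?_, fun e he e' he' hne w hwe hwe' => ?_⟩
    · obtain ⟨i, f, hf, rfl⟩ := mem_glue.mp he
      exact copy_mem_edgeSet_iff.mpr ((hm i).1 f hf)
    · obtain ⟨i, f, hf, rfl⟩ := mem_glue.mp he
      obtain ⟨j, g, hg, rfl⟩ := mem_glue.mp he'
      obtain ⟨rfl, haf⟩ := mem_copy.mp hwe
      obtain ⟨rfl, hag⟩ := mem_copy.mp hwe'
      exact (hm _).2 f hf g hg (fun hfg => hne (hfg ▸ rfl)) _ haf hag

theorem dominates_glue_iff {m : Fin k → Finset (Sym2 (Fin 4))} :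
    (∀ e ∈ (kP4 k).edgeSet, ∃ f ∈ glue m, ∃ v ∈ e, v ∈ f) ↔
      ∀ i, ∀ e ∈ (pathGraph 4).edgeSet, ∃ f ∈ m i, ∃ v ∈ e, v ∈ f := by
  constructor
  · intro hdom i e he
    obtain ⟨_, hg, ⟨j, a⟩, hwe, hwg⟩ := hdom (copy i e) (copy_mem_edgeSet_iff.mpr he)
    obtain ⟨j', f, hf, rfl⟩ := mem_glue.mp hg
    obtain ⟨rfl, hae⟩ := mem_copy.mp hwe
    obtain ⟨rfl, haf⟩ := mem_copy.mp hwg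
    exact ⟨f, hf, a, hae, haf⟩
  · intro hdom e he
    obtain ⟨i, f, rfl⟩ := exists_copy_eq_of_mem_edgeSet he
    obtain ⟨g, hg, a, haf, hag⟩ := hdom i f (copy_mem_edgeSet_iff.mp he)
    exact ⟨copy i g, mem_glue.mpr ⟨i, g, hg, rfl⟩, (i, a), mem_copy.mpr ⟨rfl, haf⟩,
      mem_copy.mpr ⟨rfl, hag⟩⟩

theorem isMaximalMatchingIn_glue_iff {m : Fin k → Finset (Sym2 (Fin 4))} :
    IsMaximalMatchingIn (kP4 k) (glue m) ↔ ∀ i, IsMaximalMatchingIn (pathGraph 4) (m i) := by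
  simp only [isMaximalMatchingIn_iff, isMatchingIn_glue_iff, dominates_glue_iff, forall_and]

theorem isMaximalMatchingIn_iff_restrict {M : Finset (Sym2 (Fin k × Fin 4))} :
    IsMaximalMatchingIn (kP4 k) M ↔ (∀ e ∈ M, e ∈ (kP4 k).edgeSet) ∧
      ∀ i, restrict M i = perfect ∨ restrict M i = middle := by
  simp only [← isMaximalMatchingIn_pathGraph_iff]
  refine ⟨fun hM => ⟨hM.1.1, ?_⟩, fun ⟨hedges, hm⟩ => ?_⟩
  · rw [← isMaximalMatchingIn_glue_iff, glue_restrict hM.1.1]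
    exact hM
  · rwa [← isMaximalMatchingIn_glue_iff, glue_restrict hedges] at hm

theorem card_le_of_isMatchingIn {M : Finset (Sym2 (Fin k × Fin 4))}
    (hM : IsMatchingIn (kP4 k) M) : M.card ≤ 2 * k := by
  have hedges := hM.1
  rw [← glue_restrict hedges, isMatchingIn_glue_iff] at hM
  rw [← glue_restrict hedges, card_glue]
  calc ∑ i, (restrict M i).card ≤ ∑ _ : Fin k, 2 :=
        sum_le_sum fun i _ => card_le_two_of_isMatchingIn (hM i)
    _ = 2 * k := by simp [mul_comm]

theorem le_card_of_isMaximalMatchingIn {M : Finset (Sym2 (Fin k × Fin 4))}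
    (hM : IsMaximalMatchingIn (kP4 k) M) : k ≤ M.card := by
  obtain ⟨hedges, hcases⟩ := isMaximalMatchingIn_iff_restrict.mp hM
  rw [← glue_restrict hedges, card_glue]
  calc k = ∑ _ : Fin k, 1 := by simp
    _ ≤ ∑ i, (restrict M i).card := sum_le_sum fun i _ => by
        rcases hcases i with h | h <;> rw [h] <;> decide

theorem eq_glue_perfect_of_sat {M : Finset (Sym2 (Fin k × Fin 4))}
    (hM : IsMaximalMatchingIn (kP4 k) M) (hsat : ∀ i, Sat M (i, 0)) :
    M = glue fun _ => perfect := by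
  obtain ⟨hedges, hcases⟩ := isMaximalMatchingIn_iff_restrict.mp hM
  rw [← glue_restrict hedges]
  congr 1
  funext i
  refine (hcases i).resolve_right fun hmid => not_sat_middle_zero ?_
  rw [← hmid, ← sat_glue, glue_restrict hedges]
  exact hsat i

theorem equiSet_range_zero : EquiSet (kP4 k) (Set.range fun i => (i, 0)) := by
  intro M M' hM hM' hsat hsat'
  rw [eq_glue_perfect_of_sat hM fun i => hsat _ ⟨i, rfl⟩,
    eq_glue_perfect_of_sat hM' fun i => hsat' _ ⟨i, rfl⟩]

theorem le_ncard_of_equiSet {S : Set (Fin k × Fin 4)} (hS : EquiSet (kP4 k) S) :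
    k ≤ S.ncard := by
  classical
  by_cases hall : ∀ i, ∃ a, (i, a) ∈ S
  · have himage : Prod.fst '' S = Set.univ :=
      Set.eq_univ_of_forall fun i => (hall i).elim fun a ha => ⟨(i, a), ha, rfl⟩
    calc k = (Prod.fst '' S).ncard := by simp [himage]
      _ ≤ S.ncard := Set.ncard_image_le
  · push Not at hall
    obtain ⟨i, hi⟩ := hall
    set swapped := Function.update (fun _ : Fin k => perfect) i middle
    have hswapped : ∀ j, IsMaximalMatchingIn (pathGraph 4) (swapped j) := by
      intro j
      rcases eq_or_ne j i with rfl | hj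
      · simpa [swapped] using isMaximalMatchingIn_middle
      · simpa [swapped, hj] using isMaximalMatchingIn_perfect
    have hcovers : ∀ m : Fin k → Finset (Sym2 (Fin 4)), (∀ j, j ≠ i → m j = perfect) →
        CoversSet (glue m) S := by
      rintro m hm ⟨j, a⟩ hja
      rw [sat_glue, hm j (by rintro rfl; exact hi a hja)]
      exact sat_perfect a
    have hcard := hS _ _ (isMaximalMatchingIn_glue_iff.mpr fun _ => isMaximalMatchingIn_perfect)
      (isMaximalMatchingIn_glue_iff.mpr hswapped) (hcovers _ fun _ _ => rfl)
      (hcovers _ fun j hj => by simp [swapped, hj])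
    refine absurd hcard (ne_of_gt ?_)
    rw [card_glue, card_glue]
    refine sum_lt_sum (fun j _ => ?_) ⟨i, mem_univ i, by simp [swapped, card_perfect, card_middle]⟩
    rcases eq_or_ne j i with rfl | hj
    · simp [swapped, card_perfect, card_middle]
    · simp [swapped, hj]

theorem nuNum_eq : nuNum (kP4 k) = 2 * k := by
  refine IsGreatest.csSup_eq ⟨⟨glue fun _ => perfect, ?_, ?_⟩, ?_⟩
  · exact isMatchingIn_glue_iff.mpr fun _ => isMaximalMatchingIn_perfect.1
  · simp [card_glue, card_perfect, mul_comm]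
  · rintro _ ⟨M, hM, rfl⟩
    exact card_le_of_isMatchingIn hM

theorem betaNum_eq : betaNum (kP4 k) = k := by
  refine IsLeast.csInf_eq ⟨⟨glue fun _ => middle, ?_, ?_⟩, ?_⟩
  · exact isMaximalMatchingIn_glue_iff.mpr fun _ => isMaximalMatchingIn_middle
  · simp [card_glue, card_middle]
  · rintro _ ⟨M, hM, rfl⟩
    exact le_card_of_isMaximalMatchingIn hM

theorem etaDefect_eq : etaDefect (kP4 k) = k := by
  refine IsLeast.csInf_eq ⟨⟨_, equiSet_range_zero, ?_⟩, ?_⟩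
  · rw [Set.ncard_range_of_injective fun i j h => (Prod.ext_iff.mp h).1, Nat.card_fin]
  · rintro _ ⟨S, hS, rfl⟩
    exact le_ncard_of_equiSet hS

end kP4

theorem stmt_19_general (k : ℕ) :
    nuNum (kP4 k) = 2 * k ∧ betaNum (kP4 k) = k ∧
    muGap (kP4 k) = k ∧ etaDefect (kP4 k) = k := by
  refine ⟨kP4.nuNum_eq, kP4.betaNum_eq, ?_, kP4.etaDefect_eq⟩
  rw [muGap, kP4.nuNum_eq, kP4.betaNum_eq]
  omega

theorem stmt_19 (k : ℕ) (hk : 0 < k) :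
    nuNum (kP4 k) = 2 * k ∧ betaNum (kP4 k) = k ∧
    muGap (kP4 k) = k ∧ etaDefect (kP4 k) = k :=
  stmt_19_general k
end
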